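/- Let G be a simple graph in which every vertex is incident with at least one edge, and let n ∈ ℕ. Then |G| is n-arc connected if and only if for every choice of at most n points of |G| ∖ V (points lying in the interiors of edges) there is an arc in |G| containing all of them. -/

import Mathlib

open Topology

noncomputable section

variable {V : Type*}

open Classical in
/-- The Dirac function marking a vertex: the point of `|G|` corresponding to vertex `v`. -/
noncomputable def vertexPoint (v : V) : V → ℝ := fun u => if u = v then 1 else 0

open Classical in
/-- The point of `|G|` lying on the edge `vw` at parameter `t` (measured from `v` towards `w`). -/
noncomputable def edgePoint (v w : V) (t : ℝ) : V → ℝ :=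
  fun u => (if u = v then 1 - t else 0) + (if u = w then t else 0)

/-- The geometric realization `|G|` of a simple graph `G`, realized as the set of
formal convex combinations of adjacent pairs of vertices; each closed edge carries
its usual topology as a copy of `[0,1]`. -/
def GraphRealization (G : SimpleGraph V) : Set (V → ℝ) :=
  {x | (∃ v, x = vertexPoint v) ∨
    ∃ v w t, G.Adj v w ∧ t ∈ Set.Icc (0 : ℝ) 1 ∧ x = edgePoint v w t}

/-- A subset of a topological space is an arc if it is homeomorphic to `[0,1]`. -/
def IsArc {X : Type*} [TopologicalSpace X] (A : Set X) : Prop :=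
  Nonempty (↥A ≃ₜ ↥unitInterval)

/-- A space is `n`-arc connected if any at most `n` points lie on a common arc. -/
def NArcConn (X : Type*) [TopologicalSpace X] (n : ℕ) : Prop :=
  ∀ S : Finset X, S.card ≤ n → ∃ A : Set X, IsArc A ∧ ↑S ⊆ A

/-- The unit circle in the plane. -/
def unitCircleSet : Set (ℝ × ℝ) := {p | p.1 ^ 2 + p.2 ^ 2 = 1}

/-- A subset of a topological space is a simple closed curve if homeomorphic to the circle. -/
def IsSimpleClosedCurve {X : Type*} [TopologicalSpace X] (C : Set X) : Prop :=
  Nonempty (↥C ≃ₜ ↥unitCircleSet)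

/-- A space is `n`-circle connected if any at most `n` points lie on a common
simple closed curve. -/
def NCircleConn (X : Type*) [TopologicalSpace X] (n : ℕ) : Prop :=
  ∀ S : Finset X, S.card ≤ n → ∃ C : Set X, IsSimpleClosedCurve C ∧ ↑S ⊆ C

/-- A space is `n`-strongly arc connected if any list of at most `n` points is contained
in an arc, the points appearing along the arc in the listed order. -/
def NStrongArcConn (X : Type*) [TopologicalSpace X] (n : ℕ) : Prop :=
  ∀ l : List X, l.length ≤ n →
    ∃ f : ↥unitInterval → X, Topology.IsEmbedding f ∧
      ∃ t : Fin l.length → ↥unitInterval, Monotone t ∧ ∀ i, f (t i) = l.get i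

/-- A graph is `k`-connected if removing fewer than `k` vertices leaves it connected. -/
def KConnected (G : SimpleGraph V) (k : ℕ) : Prop :=
  ∀ S : Set V, S.encard < (k : ℕ∞) → (G.induce (Sᶜ : Set V)).Connected

/-- A graph is cyclically connected if any two vertices lie on a common cycle. -/
def CyclicallyConnected (G : SimpleGraph V) : Prop :=
  ∀ v w : V, ∃ (u : V) (c : G.Walk u u), c.IsCycle ∧ v ∈ c.support ∧ w ∈ c.support

/-- The circle of radius `r` centered at `c` in the plane. -/
def circleAt (c : ℝ × ℝ) (r : ℝ) : Set (ℝ × ℝ) :=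
  {p | (p.1 - c.1) ^ 2 + (p.2 - c.2) ^ 2 = r ^ 2}

/-- The horizontal segment at height `y` from abscissa `a` to `b`. -/
def hSeg (y a b : ℝ) : Set (ℝ × ℝ) := {p | p.2 = y ∧ a ≤ p.1 ∧ p.1 ≤ b}

/-- The θ-curve: unit circle together with horizontal diameter. -/
def thetaSet : Set (ℝ × ℝ) := circleAt (0, 0) 1 ∪ hSeg 0 (-1) 1

/-- Figure-eight: two unit circles meeting at the origin. -/
def figureEightSet : Set (ℝ × ℝ) := circleAt (-1, 0) 1 ∪ circleAt (1, 0) 1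

/-- Lollipop: unit circle with the segment from `(1,0)` to `(2,0)` attached. -/
def lollipopSet : Set (ℝ × ℝ) := circleAt (0, 0) 1 ∪ hSeg 0 1 2

/-- Lollipop with its free endpoint removed. -/
def openLollipopSet : Set (ℝ × ℝ) := lollipopSet \ {(2, 0)}

/-- Dumbbell: two disjoint unit circles joined by a segment. -/
def dumbbellSet : Set (ℝ × ℝ) := circleAt (-2, 0) 1 ∪ circleAt (2, 0) 1 ∪ hSeg 0 (-1) 1

/-- Happy-face curve: two circles meeting at a point, joined by a further arc. -/
def happyFaceSet : Set (ℝ × ℝ) :=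
  circleAt (-1, 0) 1 ∪ circleAt (1, 0) 1 ∪ {p | p.1 ^ 2 + p.2 ^ 2 = 4 ∧ p.2 ≤ 0}

/-- Baguette curve: two disjoint circles joined by two disjoint arcs. -/
def baguetteSet : Set (ℝ × ℝ) :=
  circleAt (-3, 0) 1 ∪ circleAt (3, 0) 1 ∪ hSeg 0 (-2) 2 ∪ hSeg 1 (-3) 3

/-- A graph is a basic 4-ac graph iff its realization is homeomorphic to a circle,
a θ-curve, a happy-face curve or a baguette curve (this captures precisely the
subdivisions of those four graphs). -/
def IsBasicFourAC {W : Type*} (H : SimpleGraph W) : Prop :=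
  Nonempty (↥(GraphRealization H) ≃ₜ ↥unitCircleSet) ∨
  Nonempty (↥(GraphRealization H) ≃ₜ ↥thetaSet) ∨
  Nonempty (↥(GraphRealization H) ≃ₜ ↥happyFaceSet) ∨
  Nonempty (↥(GraphRealization H) ≃ₜ ↥baguetteSet)

/-- A chain-graph decomposition of the connected graph `G`: links indexed by an
interval `J` of `ℤ`, non-consecutive links are disjoint, consecutive links share
exactly one vertex. -/
structure IsChainGraph (G : SimpleGraph V) (J : Set ℤ) (L : ℤ → G.Subgraph) : Prop where
  connected : G.Connected
  ordConnected : J.OrdConnected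
  nonempty : J.Nonempty
  cover : (⨆ i ∈ J, L i) = (⊤ : G.Subgraph)
  sep : ∀ i ∈ J, ∀ j ∈ J, i + 1 < j → (L i).verts ∩ (L j).verts = ∅
  link : ∀ i ∈ J, i + 1 ∈ J → ∃ v, (L i).verts ∩ (L (i + 1)).verts = {v}

/-- A cut-vertex: a vertex whose removal disconnects the graph. -/
def IsCutVertex (G : SimpleGraph V) (v : V) : Prop :=
  ¬ (G.induce ({v}ᶜ : Set V)).Connected

/-- A block: a maximal 2-connected subgraph. -/
def IsBlock (G : SimpleGraph V) (H : G.Subgraph) : Prop :=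
  KConnected H.coe 2 ∧ ∀ H' : G.Subgraph, H ≤ H' → KConnected H'.coe 2 → H' = H

/-- The block graph of `G`: the bipartite graph on cut-vertices and blocks, a cut-vertex
being adjacent to the blocks containing it. -/
def BlockGraph (G : SimpleGraph V) :
    SimpleGraph ({v : V // IsCutVertex G v} ⊕ {H : G.Subgraph // IsBlock G H}) :=
  SimpleGraph.fromRel fun a b =>
    ∃ (c : {v : V // IsCutVertex G v}) (B : {H : G.Subgraph // IsBlock G H}),
      a = Sum.inl c ∧ b = Sum.inr B ∧ (c : V) ∈ (B : G.Subgraph).verts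

/-- An `A`–`B` path: a path starting in `A`, ending in `B` and meeting `A ∪ B` only
in these two endvertices. -/
structure ABPath (G : SimpleGraph V) (A B : Set V) where
  first : V
  last : V
  walk : G.Walk first last
  isPath : walk.IsPath
  firstA : first ∈ A
  lastB : last ∈ B
  meetA : ∀ v ∈ walk.support, v ∈ A → v = first
  meetB : ∀ v ∈ walk.support, v ∈ B → v = last

/-- A family of pairwise vertex-disjoint paths. -/
def PathFamilyDisjoint {G : SimpleGraph V} {A B : Set V} {k : ℕ}
    (P : Fin k → ABPath G A B) : Prop :=
  ∀ i j, i ≠ j → ∀ v, v ∈ (P i).walk.support → v ∉ (P j).walk.support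

/-- The set of vertices used by a family of paths. -/
def familySupport {G : SimpleGraph V} {A B : Set V} {k : ℕ}
    (P : Fin k → ABPath G A B) : Set V :=
  {v | ∃ i, v ∈ (P i).walk.support}

/-- The set of edges used by a family of paths. -/
def familyEdges {G : SimpleGraph V} {A B : Set V} {k : ℕ}
    (P : Fin k → ABPath G A B) : Set (Sym2 V) :=
  {e | ∃ i, e ∈ (P i).walk.edges}

/-- A walk `W` (with no repeated edges) is alternating with respect to the disjoint
path family `P`: it starts in `A` off the paths; repeated vertices lie on paths of the
family; upon hitting a path by a new edge it follows that path backwards for at least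
one edge; and it traverses edges of paths of the family only backwards. -/
structure IsAlternatingWalk {G : SimpleGraph V} {A B : Set V} {k : ℕ}
    (P : Fin k → ABPath G A B) {x y : V} (W : G.Walk x y) : Prop where
  trail : W.IsTrail
  startA : x ∈ A
  startOff : x ∉ familySupport P
  repeats : ∀ v, List.Duplicate v W.support → v ∈ familySupport P
  follows : ∀ (i : ℕ) (hi : i < W.darts.length) (j : Fin k),
      (W.darts.get ⟨i, hi⟩).snd ∈ (P j).walk.support →
      (W.darts.get ⟨i, hi⟩).edge ∉ (P j).walk.edges →
      ∃ h : i + 1 < W.darts.length, (W.darts.get ⟨i + 1, h⟩).symm ∈ (P j).walk.darts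
  backward : ∀ d ∈ W.darts, ∀ j : Fin k,
      d.edge ∈ (P j).walk.edges → d.symm ∈ (P j).walk.darts

end

/-!
Replace every vertex point `p` of the given set by an interior point `q` of an edge at `p` and
take an arc through the new points. To recover a vertex `v` of an edge `vw` whose interior
meets the arc, walk from `v` along the edge up to the first point `r` of the arc. Near an
interior point of the arc, the arc would run inside the open edge on both sides of `r`, so it
would meet the edge before `r`; hence `r` is an endpoint of the arc and the segment from `v`
to `r` can be attached to it.
-/

open Set Function

section Arcs

variable {X : Type*} [TopologicalSpace X]

theorem isArc_range [T2Space X] {x y : X} (γ : Path x y) (hγ : Injective γ) :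
    IsArc (range γ) :=
  ⟨((γ.continuous.isClosedEmbedding hγ).toIsEmbedding.toHomeomorph).symm⟩

theorem IsArc.exists_path {A : Set X} (hA : IsArc A) :
    ∃ (x y : X) (γ : Path x y), Injective γ ∧ range γ = A := by
  obtain ⟨e⟩ := hA
  refine ⟨_, _, ⟨⟨Subtype.val ∘ e.symm, by fun_prop⟩, rfl, rfl⟩,
    Subtype.val_injective.comp e.symm.injective, ?_⟩
  change range (Subtype.val ∘ e.symm) = A
  rw [range_comp, e.symm.surjective.range_eq, image_univ, Subtype.range_coe]

theorem Path.injective_symm {x y : X} {γ : Path x y} (hγ : Injective γ) :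
    Injective γ.symm :=
  hγ.comp unitInterval.symm_bijective.injective

theorem Path.injective_trans {x y z : X} {γ : Path x y} {γ' : Path y z} (hγ : Injective γ)
    (hγ' : Injective γ') (hdisj : range γ ∩ range γ' ⊆ {y}) : Injective (γ.trans γ') := by
  have mixed : ∀ s t : unitInterval, (s : ℝ) ≤ 1 / 2 → ¬ (t : ℝ) ≤ 1 / 2 →
      (γ.trans γ') s ≠ (γ.trans γ') t := by
    intro s t hs ht heq
    rw [Path.trans_apply, Path.trans_apply, dif_pos hs, dif_neg ht] at heq
    have hy := hdisj ⟨⟨_, heq⟩, mem_range_self _⟩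
    have := congrArg Subtype.val (hγ' (hy.trans γ'.source.symm))
    simp only [Set.Icc.coe_zero] at this
    linarith
  intro s t heq
  by_cases hs : (s : ℝ) ≤ 1 / 2 <;> by_cases ht : (t : ℝ) ≤ 1 / 2
  · rw [Path.trans_apply, Path.trans_apply, dif_pos hs, dif_pos ht] at heq
    have := congrArg Subtype.val (hγ heq)
    exact Subtype.ext (by simpa using this)
  · exact absurd heq (mixed s t hs ht)
  · exact absurd heq.symm (mixed t s ht hs)
  · rw [Path.trans_apply, Path.trans_apply, dif_neg hs, dif_neg ht] at heq
    have := congrArg Subtype.val (hγ' heq)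
    exact Subtype.ext (by simpa using this)

end Arcs

theorem ContinuousOn.exists_lt_of_injOn_Ioo {α δ : Type*} [ConditionallyCompleteLinearOrder α]
    [TopologicalSpace α] [OrderTopology α] [DenselyOrdered α] [LinearOrder δ]
    [TopologicalSpace δ] [OrderClosedTopology δ] {f : α → δ} {l u τ : α}
    (hf : ContinuousOn f (Ioo l u)) (hi : InjOn f (Ioo l u)) (hτ : τ ∈ Ioo l u) :
    ∃ r ∈ Ioo l u, f r < f τ := by
  obtain ⟨a, hla, haτ⟩ := exists_between hτ.1
  obtain ⟨b, hτb, hbu⟩ := exists_between hτ.2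
  have ha : a ∈ Ioo l u := ⟨hla, haτ.trans hτ.2⟩
  have hb : b ∈ Ioo l u := ⟨hτ.1.trans hτb, hbu⟩
  rcases hf.strictMonoOn_of_injOn_Ioo (hτ.1.trans hτ.2) hi with hmono | hanti
  · exact ⟨a, ha, hmono ha hτ haτ⟩
  · exact ⟨b, hb, hanti hτ hb hτb⟩

section EdgePoints

variable {V : Type*}

theorem edgePoint_zero (v w : V) : edgePoint v w 0 = vertexPoint v := by
  funext u
  simp [edgePoint, vertexPoint]

theorem edgePoint_apply_right {v w : V} (h : w ≠ v) (t : ℝ) : edgePoint v w t w = t := by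
  simp [edgePoint, h]

theorem edgePoint_apply_left {v w : V} (h : v ≠ w) (t : ℝ) : edgePoint v w t v = 1 - t := by
  simp [edgePoint, h]

theorem edgePoint_comm (v w : V) (t : ℝ) : edgePoint v w t = edgePoint w v (1 - t) := by
  funext u
  simp only [edgePoint]
  by_cases hv : u = v <;> by_cases hw : u = w <;> simp [hv, hw] <;> ring

theorem continuous_edgePoint (v w : V) : Continuous (edgePoint v w) := by
  classical
  refine continuous_pi fun u => ?_
  simp only [edgePoint]
  split_ifs <;> fun_prop

theorem edgePoint_ne_vertexPoint {v w : V} (hvw : v ≠ w) {t : ℝ} (ht : t ∈ Ioo 0 1) (u : V) :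
    edgePoint v w t ≠ vertexPoint u := by
  intro h
  have hv := congrFun h v
  have hw := congrFun h w
  rw [edgePoint_apply_left hvw] at hv
  rw [edgePoint_apply_right hvw.symm] at hw
  simp only [vertexPoint] at hv hw
  split_ifs at hv hw <;> linarith [ht.1, ht.2]

theorem eq_edgePoint_of_pos {G : SimpleGraph V} {x : V → ℝ} (hx : x ∈ GraphRealization G)
    {v w : V} (hvw : v ≠ w) (hv : 0 < x v) (hw : 0 < x w) : x = edgePoint v w (x w) := by
  suffices ∃ s, x = edgePoint v w s by
    obtain ⟨s, rfl⟩ := this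
    rw [edgePoint_apply_right hvw.symm]
  rcases hx with ⟨u, rfl⟩ | ⟨a, b, t, -, -, rfl⟩
  · simp only [vertexPoint] at hv hw
    split_ifs at hv hw with h₁ h₂ <;> first | exact absurd (h₁.trans h₂.symm) hvw | linarith
  · have mem : ∀ u, 0 < edgePoint a b t u → u = a ∨ u = b := by
      intro u hu
      by_contra! h
      simp [edgePoint, h.1, h.2] at hu
    rcases mem v hv with rfl | rfl <;> rcases mem w hw with rfl | rfl
    · exact absurd rfl hvw
    · exact ⟨t, rfl⟩
    · exact ⟨1 - t, edgePoint_comm _ _ _⟩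
    · exact absurd rfl hvw

end EdgePoints

namespace GraphRealization

variable {V : Type*} {G : SimpleGraph V} {v w : V}

noncomputable def vertex (G : SimpleGraph V) (v : V) : GraphRealization G :=
  ⟨vertexPoint v, Or.inl ⟨v, rfl⟩⟩

theorem edgePoint_mem (hvw : G.Adj v w) {t : ℝ} (ht : t ∈ unitInterval) :
    edgePoint v w t ∈ GraphRealization G :=
  Or.inr ⟨v, w, t, hvw, ht, rfl⟩

noncomputable def segment (hvw : G.Adj v w) {c : ℝ} (hc : c ∈ unitInterval)
    (q : GraphRealization G) (hq : (q : V → ℝ) = edgePoint v w c) : Path (vertex G v) q where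
  toFun t := ⟨edgePoint v w (c * t), edgePoint_mem hvw (unitInterval.mul_mem hc t.2)⟩
  continuous_toFun := ((continuous_edgePoint v w).comp (by fun_prop)).subtype_mk _
  source' := by simp [vertex, edgePoint_zero]
  target' := Subtype.ext (by simp [hq])

@[simp]
theorem segment_apply (hvw : G.Adj v w) {c : ℝ} (hc : c ∈ unitInterval) (q : GraphRealization G)
    (hq : (q : V → ℝ) = edgePoint v w c) (t : unitInterval) :
    (segment hvw hc q hq t : V → ℝ) = edgePoint v w (c * t) :=
  rfl

theorem segment_injective (hvw : G.Adj v w) {c : ℝ} (hc : c ∈ unitInterval) (hc₀ : 0 < c)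
    (q : GraphRealization G) (hq : (q : V → ℝ) = edgePoint v w c) :
    Injective (segment hvw hc q hq) := by
  intro s t h
  have := congrArg (fun p : GraphRealization G => (p : V → ℝ) w) h
  simp only [segment_apply, edgePoint_apply_right hvw.ne'] at this
  exact Subtype.ext (mul_left_cancel₀ hc₀.ne' this)

theorem eq_zero_or_eq_one_of_forall_edgePoint_ne {x y : GraphRealization G} {γ : Path x y}
    (hγ : Injective γ) (hvw : v ≠ w) {c : ℝ} (hc₀ : 0 < c) (hc₁ : c < 1) {τ : unitInterval}
    (hτ : (γ τ : V → ℝ) = edgePoint v w c)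
    (hfirst : ∀ s, ∀ t ∈ Ico 0 c, (γ s : V → ℝ) ≠ edgePoint v w t) : τ = 0 ∨ τ = 1 := by
  by_contra! hτ₀₁
  have hτI : (τ : ℝ) ∈ Ioo 0 1 :=
    ⟨τ.2.1.lt_of_ne fun h => hτ₀₁.1 (Subtype.ext h.symm),
      τ.2.2.lt_of_ne fun h => hτ₀₁.2 (Subtype.ext h)⟩
  set F : ℝ → V → ℝ := fun r => (γ.extend r : V → ℝ)
  have hF : Continuous F := continuous_subtype_val.comp γ.continuous_extend
  have hFγ : ∀ r (hr : r ∈ unitInterval), F r = γ ⟨r, hr⟩ := fun r hr =>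
    congrArg Subtype.val (γ.extend_apply hr)
  have hFτ : F τ = edgePoint v w c := (hFγ τ τ.2).trans hτ
  -- near `τ` the path stays inside the open edge `vw`
  have hU : {r | 0 < F r v} ∩ {r | 0 < F r w} ∩ Ioo 0 1 ∈ 𝓝 (τ : ℝ) := by
    have hFu : ∀ u, IsOpen {r | 0 < F r u} := fun u =>
      isOpen_lt continuous_const ((continuous_apply u).comp hF)
    refine ((hFu v).inter (hFu w)).inter isOpen_Ioo |>.mem_nhds ⟨⟨?_, ?_⟩, hτI⟩
    · change 0 < F τ v
      rw [hFτ, edgePoint_apply_left hvw]; linarith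
    · change 0 < F τ w
      rwa [hFτ, edgePoint_apply_right hvw.symm]
  obtain ⟨l, u, hτlu, hlu⟩ := mem_nhds_iff_exists_Ioo_subset.1 hU
  have hedge : ∀ r ∈ Ioo l u, F r = edgePoint v w (F r w) := fun r hr =>
    eq_edgePoint_of_pos (γ.extend r).2 hvw (hlu hr).1.1 (hlu hr).1.2
  have hinj : InjOn (fun r => F r w) (Ioo l u) := by
    intro r hr r' hr' h
    have hr₀₁ := Ioo_subset_Icc_self (hlu hr).2
    have hr₀₁' := Ioo_subset_Icc_self (hlu hr').2
    have hFF : F r = F r' := by rw [hedge r hr, hedge r' hr']; exact congrArg _ h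
    rw [hFγ r hr₀₁, hFγ r' hr₀₁'] at hFF
    exact congrArg Subtype.val (hγ (Subtype.ext hFF))
  obtain ⟨r, hr, hlt⟩ :=
    ((continuous_apply w).comp hF).continuousOn.exists_lt_of_injOn_Ioo hinj hτlu
  have hrc : F r w < c := by simpa [hFτ, edgePoint_apply_right hvw.symm] using hlt
  have hr₀₁ := Ioo_subset_Icc_self (hlu hr).2
  exact hfirst _ (F r w) ⟨(hlu hr).1.2.le, hrc⟩ ((hFγ r hr₀₁).symm.trans (hedge r hr))

theorem _root_.IsArc.exists_superset_vertex {A : Set (GraphRealization G)} (hA : IsArc A)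
    (hvw : G.Adj v w) {s : ℝ} (hs : s ∈ Ioo 0 1) {q : GraphRealization G} (hqA : q ∈ A)
    (hq : (q : V → ℝ) = edgePoint v w s) :
    ∃ A', IsArc A' ∧ A ⊆ A' ∧ vertex G v ∈ A' := by
  obtain ⟨x, y, γ, hγ, rfl⟩ := hA.exists_path
  set T : Set ℝ := Icc 0 s ∩ edgePoint v w ⁻¹' range fun τ => (γ τ : V → ℝ)
  have hT : IsClosed T := isClosed_Icc.inter
    ((isCompact_range (by fun_prop)).isClosed.preimage (continuous_edgePoint v w))
  have hTbdd : BddBelow T := ⟨0, fun t ht => ht.1.1⟩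
  obtain ⟨q', hq'⟩ := hqA
  set c := sInf T
  obtain ⟨⟨hc₀, hcs⟩, τ, hτ : (γ τ : V → ℝ) = edgePoint v w c⟩ : c ∈ T :=
    hT.csInf_mem ⟨s, ⟨hs.1.le, le_rfl⟩, q', hq ▸ congrArg Subtype.val hq'⟩ hTbdd
  have hfirst : ∀ τ', ∀ t ∈ Ico 0 c, (γ τ' : V → ℝ) ≠ edgePoint v w t := fun τ' t ht h =>
    (csInf_le hTbdd ⟨⟨ht.1, ht.2.le.trans hcs⟩, τ', h⟩).not_gt ht.2
  rcases hc₀.eq_or_lt with hc₀ | hc₀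
  · refine ⟨range γ, isArc_range γ hγ, subset_rfl, τ, Subtype.ext ?_⟩
    rw [hτ, ← hc₀, edgePoint_zero]
    rfl
  obtain ⟨z, δ, hδ, hδγ⟩ : ∃ z, ∃ δ : Path (γ τ) z, Injective δ ∧ range δ = range γ := by
    rcases eq_zero_or_eq_one_of_forall_edgePoint_ne hγ hvw.ne hc₀ (hcs.trans_lt hs.2) hτ
      hfirst with rfl | rfl
    · exact ⟨y, γ.cast γ.source rfl, hγ, rfl⟩
    · exact ⟨x, γ.symm.cast γ.target rfl, Path.injective_symm hγ, γ.symm_range⟩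
  set σ := segment hvw ⟨hc₀.le, hcs.trans hs.2.le⟩ (γ τ) hτ
  have hdisj : range σ ∩ range δ ⊆ {γ τ} := by
    rintro _ ⟨⟨t, rfl⟩, hδt⟩
    rw [hδγ] at hδt
    obtain ⟨τ', hτ'⟩ := hδt
    obtain rfl : t = 1 := by
      by_contra ht
      have hct : c * t < c :=
        mul_lt_of_lt_one_right hc₀ (t.2.2.lt_of_ne fun h => ht (Subtype.ext h))
      exact hfirst τ' _ ⟨mul_nonneg hc₀.le t.2.1, hct⟩ (by rw [hτ']; rfl)
    exact σ.target
  refine ⟨range (σ.trans δ),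
    isArc_range _ (Path.injective_trans (segment_injective hvw _ hc₀ _ _) hδ hdisj), ?_, ?_⟩
  · rw [Path.trans_range, hδγ]
    exact subset_union_right
  · rw [Path.trans_range]
    exact Or.inl ⟨0, σ.source⟩

def IsEdgeProxy (q p : GraphRealization G) : Prop :=
  q = p ∨ ∃ v w s, G.Adj v w ∧ s ∈ Ioo 0 1 ∧ p = vertex G v ∧ (q : V → ℝ) = edgePoint v w s

theorem exists_isEdgeProxy (hV : ∀ v, ∃ w, G.Adj v w) (p : GraphRealization G) :
    ∃ q : GraphRealization G, (∀ v, (q : V → ℝ) ≠ vertexPoint v) ∧ IsEdgeProxy q p := by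
  by_cases hp : ∃ v, (p : V → ℝ) = vertexPoint v
  · obtain ⟨v, hv⟩ := hp
    obtain ⟨w, hvw⟩ := hV v
    have hs : (2⁻¹ : ℝ) ∈ Ioo 0 1 := by norm_num
    exact ⟨⟨_, edgePoint_mem hvw (Ioo_subset_Icc_self hs)⟩, edgePoint_ne_vertexPoint hvw.ne hs,
      Or.inr ⟨v, w, _, hvw, hs, Subtype.ext hv, rfl⟩⟩
  · push Not at hp
    exact ⟨p, hp, Or.inl rfl⟩

theorem _root_.IsArc.exists_superset_of_isEdgeProxy {A : Set (GraphRealization G)} (hA : IsArc A)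
    {p q : GraphRealization G} (hqA : q ∈ A) (hqp : IsEdgeProxy q p) :
    ∃ A', IsArc A' ∧ A ⊆ A' ∧ p ∈ A' := by
  rcases hqp with rfl | ⟨v, w, s, hvw, hs, rfl, hq⟩
  · exact ⟨A, hA, subset_rfl, hqA⟩
  · exact hA.exists_superset_vertex hvw hs hqA hq

theorem _root_.IsArc.exists_superset_finset_of_isEdgeProxy {A : Set (GraphRealization G)}
    (hA : IsArc A) (S : Finset (GraphRealization G)) (hS : ∀ p ∈ S, ∃ q ∈ A, IsEdgeProxy q p) :
    ∃ A', IsArc A' ∧ A ⊆ A' ∧ ↑S ⊆ A' := by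
  classical
  induction S using Finset.induction_on generalizing A with
  | empty => exact ⟨A, hA, subset_rfl, by simp⟩
  | insert p S _ ih =>
    obtain ⟨q, hqA, hqp⟩ := hS p (Finset.mem_insert_self p S)
    obtain ⟨A₁, hA₁, hAA₁, hpA₁⟩ := hA.exists_superset_of_isEdgeProxy hqA hqp
    obtain ⟨A', hA', hA₁A', hSA'⟩ := ih hA₁ fun p' hp' =>
      let ⟨q', hq'A, hq'p'⟩ := hS p' (Finset.mem_insert_of_mem hp')
      ⟨q', hAA₁ hq'A, hq'p'⟩
    rw [Finset.coe_insert]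
    exact ⟨A', hA', hAA₁.trans hA₁A', insert_subset (hA₁A' hpA₁) hSA'⟩

end GraphRealization

/-- For a graph `G` in which every vertex is incident with at least one edge,
`|G|` is `n`-ac iff every at most `n` points of `|G|` lying in interiors of edges
(i.e. not vertex points) lie on a common arc. -/
theorem statement2 {V : Type*} (G : SimpleGraph V) (hV : ∀ v : V, ∃ w, G.Adj v w) (n : ℕ) :
    NArcConn ↥(GraphRealization G) n ↔
      ∀ S : Finset ↥(GraphRealization G), S.card ≤ n →
        (∀ p ∈ S, ∀ v : V, (p : V → ℝ) ≠ vertexPoint v) →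
        ∃ A : Set ↥(GraphRealization G), IsArc A ∧ ↑S ⊆ A := by
  classical
  refine ⟨fun h S hS _ => h S hS, fun H S hS => ?_⟩
  choose σ hσv hσ using GraphRealization.exists_isEdgeProxy hV
  obtain ⟨A, hA, hσSA⟩ := H (S.image σ) (Finset.card_image_le.trans hS) fun q hq => by
    obtain ⟨p, -, rfl⟩ := Finset.mem_image.1 hq
    exact hσv p
  obtain ⟨A', hA', -, hSA'⟩ := hA.exists_superset_finset_of_isEdgeProxy S fun p hp =>
    ⟨σ p, hσSA (Finset.mem_image_of_mem σ hp), hσ p⟩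
  exact ⟨A', hA', hSA'⟩
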